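/- The group ⟨y, β | [β, y²] = 1, y⁻⁴β³ = 1, y⁻²β³ = 1⟩ is isomorphic to the free product Z₂ * Z₃. -/

import Mathlib

/-- `⟨y, β | [β, y²] = 1, y⁻⁴β³ = 1, y⁻²β³ = 1⟩`, generators `y = of 0`, `β = of 1`. -/
def relsStmt18 : Set (FreeGroup (Fin 2)) :=
  let y := FreeGroup.of (0 : Fin 2)
  let b := FreeGroup.of (1 : Fin 2)
  {b * y ^ 2 * b⁻¹ * (y ^ 2)⁻¹,
   (y ^ 4)⁻¹ * b ^ 3,
   (y ^ 2)⁻¹ * b ^ 3}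

/-!
Comparing the two power relations `y⁴ = β³ = y²` gives `y² = 1`, hence `β³ = 1`; the commutator
relation `[β, y²] = 1` then holds trivially, so the group is `⟨y, β | y², β³⟩ ≅ ℤ/2 ∗ ℤ/3`. The two
mutually inverse homomorphisms are given on generators by `y ↦ 1 ∈ ℤ/2` and `β ↦ 1 ∈ ℤ/3`.
-/

open Multiplicative

section CyclicHom

variable {G : Type*} [Group G] {n : ℕ}

noncomputable def zmodHomOfPowEqOne {x : G} (hx : x ^ n = 1) : Multiplicative (ZMod n) →* G :=
  AddMonoidHom.toMultiplicativeLeft <| ZMod.lift n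
    ⟨zmultiplesHom (Additive G) (Additive.ofMul x), by
      simp only [zmultiplesHom_apply, natCast_zsmul, ← ofMul_pow, hx, ofMul_one]⟩

@[simp]
theorem zmodHomOfPowEqOne_ofAdd_one {x : G} (hx : x ^ n = 1) :
    zmodHomOfPowEqOne hx (ofAdd 1) = x := by
  rw [zmodHomOfPowEqOne, AddMonoidHom.toMultiplicativeLeft_apply_apply, toAdd_ofAdd,
    ← Int.cast_one, ZMod.lift_coe]
  simp

theorem MonoidHom.ext_zmod {φ ψ : Multiplicative (ZMod n) →* G}
    (h : φ (ofAdd 1) = ψ (ofAdd 1)) : φ = ψ := by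
  refine MonoidHom.ext fun a => ?_
  have ha : a = ofAdd (1 : ZMod n) ^ (ZMod.cast a.toAdd : ℤ) := by
    rw [← ofAdd_zsmul, zsmul_one, ZMod.intCast_zmod_cast, ofAdd_toAdd]
  rw [ha, map_zpow, map_zpow, h]

theorem ofAdd_one_pow_self : ofAdd (1 : ZMod n) ^ n = 1 := by
  rw [← ofAdd_nsmul, nsmul_one, ZMod.natCast_self, ofAdd_zero]

end CyclicHom

theorem pow_two_eq_one_of_pow_four_eq_of_pow_two_eq {G : Type*} [Group G] {y z : G}
    (h₄ : y ^ 4 = z) (h₂ : y ^ 2 = z) : y ^ 2 = 1 := by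
  have h : y ^ 2 * y ^ 2 = y ^ 2 := by rw [← pow_add, h₄, h₂]
  simpa using h

namespace relsStmt18

theorem lift_eq_one_of_mem {H : Type*} [Group H] {y b : H} (hy : y ^ 2 = 1) (hb : b ^ 3 = 1) :
    ∀ r ∈ relsStmt18, FreeGroup.lift ![y, b] r = 1 := by
  have hy4 : y ^ 4 = 1 := by rw [show 4 = 2 * 2 from rfl, pow_mul, hy, one_pow]
  rintro r (rfl | rfl | rfl) <;> simp [hy, hy4, hb]

local notation "G" => PresentedGroup relsStmt18
local notation "C" => Monoid.Coprod (Multiplicative (ZMod 2)) (Multiplicative (ZMod 3))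

theorem of_zero_pow_four_eq : (PresentedGroup.of 0 : G) ^ 4 = PresentedGroup.of 1 ^ 3 := by
  have h := PresentedGroup.mk_eq_mk_of_inv_mul_mem (rels := relsStmt18)
    (x := .of 0 ^ 4) (y := .of 1 ^ 3) (by simp [relsStmt18])
  rwa [map_pow, map_pow] at h

theorem of_zero_pow_two_eq : (PresentedGroup.of 0 : G) ^ 2 = PresentedGroup.of 1 ^ 3 := by
  have h := PresentedGroup.mk_eq_mk_of_inv_mul_mem (rels := relsStmt18)
    (x := .of 0 ^ 2) (y := .of 1 ^ 3) (by simp [relsStmt18])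
  rwa [map_pow, map_pow] at h

theorem of_zero_sq : (PresentedGroup.of 0 : G) ^ 2 = 1 :=
  pow_two_eq_one_of_pow_four_eq_of_pow_two_eq of_zero_pow_four_eq of_zero_pow_two_eq

theorem of_one_cube : (PresentedGroup.of 1 : G) ^ 3 = 1 := by
  rw [← of_zero_pow_two_eq, of_zero_sq]

noncomputable def toCoprod : G →* C :=
  PresentedGroup.toGroup (f := ![.inl (ofAdd 1), .inr (ofAdd 1)]) <| lift_eq_one_of_mem
    (by rw [← map_pow, ofAdd_one_pow_self, map_one])
    (by rw [← map_pow, ofAdd_one_pow_self, map_one])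

noncomputable def ofCoprod : C →* G :=
  Monoid.Coprod.lift (zmodHomOfPowEqOne of_zero_sq) (zmodHomOfPowEqOne of_one_cube)

theorem ofCoprod_comp_toCoprod : ofCoprod.comp toCoprod = MonoidHom.id G :=
  PresentedGroup.ext fun i => by fin_cases i <;> simp [toCoprod, ofCoprod]

theorem toCoprod_comp_ofCoprod : toCoprod.comp ofCoprod = MonoidHom.id C :=
  Monoid.Coprod.hom_ext (MonoidHom.ext_zmod (by simp [toCoprod, ofCoprod]))
    (MonoidHom.ext_zmod (by simp [toCoprod, ofCoprod]))

end relsStmt18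

/-- The group `⟨y, β | [β, y²] = 1, y⁻⁴β³ = 1, y⁻²β³ = 1⟩` is isomorphic to `ℤ/2 ∗ ℤ/3`. -/
theorem stmt_18 :
    Nonempty (PresentedGroup relsStmt18 ≃*
      Monoid.Coprod (Multiplicative (ZMod 2)) (Multiplicative (ZMod 3))) :=
  ⟨relsStmt18.toCoprod.toMulEquiv relsStmt18.ofCoprod relsStmt18.ofCoprod_comp_toCoprod
    relsStmt18.toCoprod_comp_ofCoprod⟩
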